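/- Let α, β ∈ ℝ \ {0}. Let H_Φ be the bounded self-adjoint operator on ℓ²({1,2,3,…}) with (H_Φ f)(1) = α·f(2) and (H_Φ f)(n) = α·f(n−1) + 2β·f(n) + α·f(n+1) for n ≥ 2, and let H_Ψ be the bounded self-adjoint operator on ℓ²({1,2,3,…}) with (H_Ψ f)(1) = (α+β)·f(2) and (H_Ψ f)(n) = (α+β)(f(n−1) + f(n+1)) for n ≥ 2. Let P_Φ(t) = Σ_{n≥0} ⟨H_Φⁿ δ₁, δ₁⟩ tⁿ and P_Ψ(t) = Σ_{n≥0} ⟨H_Ψⁿ δ₁, δ₁⟩ tⁿ, convergent for |t| sufficiently small. Then, for t near 0, 1 − 1/P_Φ(t) = 1/2 − βt − (1/2)√((2βt−1)² − 4α²t²) and 1 − 1/P_Ψ(t) = 1/2 − (1/2)√(1 − 4(α+β)²t²), where the branch of the square root satisfies √1 = 1. -/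

import Mathlib

open Metric

noncomputable section

/-- `ℓ²({1,2,3,…})`. -/
abbrev l2PNat : Type := lp (fun _ : ℕ+ => ℂ) 2

/-- `δ₁ ∈ ℓ²({1,2,3,…})`, the indicator of the vertex `1`. -/
def deltaOne : l2PNat := lp.single 2 (1 : ℕ+) (1:ℂ)

set_option maxHeartbeats 1000000

open scoped ENNReal ComplexConjugate

lemma moment_eq (H : l2PNat →L[ℂ] l2PNat) (hsa : IsSelfAdjoint H) (n : ℕ) :
    (inner ℂ ((H^n) deltaOne) deltaOne : ℂ) = ((H^n) deltaOne) 1 := by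
  have hsan : IsSelfAdjoint (H^n) := hsa.pow n
  have h1 : ContinuousLinearMap.adjoint (H^n) = H^n := by
    rw [← ContinuousLinearMap.star_eq_adjoint]; exact hsan
  calc (inner ℂ ((H^n) deltaOne) deltaOne : ℂ)
      = inner ℂ ((ContinuousLinearMap.adjoint (H^n)) deltaOne) deltaOne := by rw [h1]
    _ = inner ℂ deltaOne ((H^n) deltaOne) := ContinuousLinearMap.adjoint_inner_left _ _ _
    _ = inner ℂ (1:ℂ) (((H^n) deltaOne) 1) := lp.inner_single_left _ _ _
    _ = ((H^n) deltaOne) 1 := by simp [RCLike.inner_apply]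

lemma inner_delta_left (x : l2PNat) : (inner ℂ deltaOne x : ℂ) = x 1 := by
  rw [deltaOne, lp.inner_single_left]; simp [RCLike.inner_apply]

lemma delta_one_one : (deltaOne : ∀ _ : ℕ+, ℂ) 1 = 1 := lp.single_apply_self 2 1 1

lemma delta_one_succ (m : ℕ+) : (deltaOne : ∀ _ : ℕ+, ℂ) (m+1) = 0 := by
  apply lp.single_apply_ne
  intro h
  have := congrArg (fun k : ℕ+ => (k:ℕ)) h
  simp [PNat.add_coe] at this

lemma memlp_geom (c w : ℂ) (hw : ‖w‖ < 1) : Memℓp (fun n : ℕ+ => c * w ^ (n : ℕ)) 2 := by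
  apply memℓp_gen
  have h0 : Summable (fun n : ℕ => ‖c * w ^ n‖ ^ (2:ℝ≥0∞).toReal) := by
    have he : (fun n : ℕ => ‖c * w ^ n‖ ^ (2:ℝ≥0∞).toReal)
        = fun n : ℕ => ‖c‖^(2:ℕ) * (‖w‖^(2:ℕ))^n := by
      funext n
      rw [show (2:ℝ≥0∞).toReal = ((2:ℕ):ℝ) by norm_num, Real.rpow_natCast]
      simp [norm_mul, norm_pow, mul_pow, ← pow_mul, mul_comm 2 n]
    rw [he]
    exact (summable_geometric_of_lt_one (by positivity)
      (by simpa using pow_lt_one₀ (norm_nonneg w) hw two_ne_zero)).mul_left _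
  exact (Summable.subtype h0 _ : _)

lemma main_lemma (a b : ℝ) (ha : a ≠ 0) (H : l2PNat →L[ℂ] l2PNat)
    (hsa : IsSelfAdjoint H)
    (h1 : ∀ f : l2PNat, H f 1 = (a:ℂ) * f 2)
    (hrec : ∀ (f : l2PNat) (n : ℕ+),
      H f (n + 1) = (a:ℂ) * f n + 2*(b:ℂ) * f (n+1) + (a:ℂ) * f (n+2)) :
    ∃ r : ℝ, 0 < r ∧ ∃ s : ℂ → ℂ,
      AnalyticOnNhd ℂ s (ball 0 r) ∧ s 0 = 1 ∧
      (∀ t ∈ ball (0:ℂ) r, (s t)^2 = (2*(b:ℂ)*t - 1)^2 - 4*(a:ℂ)^2 * t^2) ∧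
      (∀ t ∈ ball (0:ℂ) r, ∃ P : ℂ,
        HasSum (fun n : ℕ => (inner ℂ ((H ^ n) deltaOne) deltaOne : ℂ) * t^n) P ∧
        1 - 1/P = 1/2 - (b:ℂ)*t - s t / 2) := by
  classical
  set g : ℂ → ℂ := fun t => (2*(b:ℂ)*t - 1)^2 - 4*(a:ℂ)^2 * t^2 with hg_def
  have hg_diff : Differentiable ℂ g := by
    rw [hg_def]; fun_prop
  have hg0 : g 0 = 1 := by simp [hg_def]
  set s : ℂ → ℂ := fun t => Complex.exp (Complex.log (g t) / 2) with hs_def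
  have hcont : ContinuousAt g 0 := hg_diff.continuous.continuousAt
  obtain ⟨r₀, hr₀pos, hr₀⟩ : ∃ r₀ > 0, ∀ t : ℂ, ‖t‖ < r₀ → ‖g t - 1‖ < 1/2 := by
    obtain ⟨δ, hδ, hδ'⟩ := Metric.continuousAt_iff.mp hcont (1/2) (by norm_num)
    exact ⟨δ, hδ, fun t ht => by
      have := hδ' (show dist t 0 < δ by simpa using ht)
      simpa [hg0, dist_eq_norm] using this⟩
  have hslit : ∀ t : ℂ, ‖t‖ < r₀ → g t ∈ Complex.slitPlane := by
    intro t ht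
    rw [Complex.mem_slitPlane_iff]
    left
    have h2 : |(g t - 1).re| ≤ ‖g t - 1‖ := Complex.abs_re_le_norm _
    have h3 : (g t).re = 1 + (g t - 1).re := by simp
    have h5 : |(g t - 1).re| < 1/2 := lt_of_le_of_lt h2 (hr₀ t ht)
    rw [h3]
    cases' abs_lt.mp h5 with h6 h7
    linarith
  have hgne : ∀ t : ℂ, ‖t‖ < r₀ → g t ≠ 0 := fun t ht =>
    Complex.slitPlane_ne_zero (hslit t ht)
  have hsana : ∀ t : ℂ, ‖t‖ < r₀ → AnalyticAt ℂ s t := by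
    intro t ht
    have hh1 : AnalyticAt ℂ g t := hg_diff.analyticAt t
    have hh2 : AnalyticAt ℂ (fun z => Complex.log (g z)) t := hh1.clog (hslit t ht)
    have hh3 : AnalyticAt ℂ (fun z => Complex.log (g z) / 2) t :=
      hh2.div analyticAt_const (by norm_num)
    exact (Complex.differentiable_exp.analyticAt _).comp hh3
  have hs_sq : ∀ t : ℂ, ‖t‖ < r₀ → (s t)^2 = g t := by
    intro t ht
    rw [hs_def]
    simp only []
    rw [sq, ← Complex.exp_add,
      show Complex.log (g t)/2 + Complex.log (g t)/2 = Complex.log (g t) by ring]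
    exact Complex.exp_log (hgne t ht)
  have hs0 : s 0 = 1 := by
    rw [hs_def]; simp [hg0]
  obtain ⟨r₁', hr₁'pos, hr₁'⟩ : ∃ r₁ > 0, ∀ t : ℂ, ‖t‖ < r₁ → ‖s t - 1‖ < 1/4 := by
    have hscont : ContinuousAt s 0 := (hsana 0 (by simpa using hr₀pos)).continuousAt
    obtain ⟨δ, hδ, hδ'⟩ := Metric.continuousAt_iff.mp hscont (1/4) (by norm_num)
    exact ⟨δ, hδ, fun t ht => by
      have := hδ' (show dist t 0 < δ by simpa using ht)
      simpa [hs0, dist_eq_norm] using this⟩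
  set r₁ := min r₁' r₀ with hr₁_def
  have hr₁pos : 0 < r₁ := lt_min hr₁'pos hr₀pos
  set r : ℝ := min r₁ (min (1/(8*(|a|+1))) (min (1/(8*(|b|+1))) (1/(‖H‖+1)))) with hr_def
  have hrpos : 0 < r :=
    lt_min hr₁pos (lt_min (by positivity) (lt_min (by positivity) (by positivity)))
  have hr_r₀ : r ≤ r₀ := le_trans (min_le_left _ _) (min_le_right _ _)
  have hr_r₁' : r ≤ r₁' := le_trans (min_le_left _ _) (min_le_left _ _)
  have hr_a : r ≤ 1/(8*(|a|+1)) := le_trans (min_le_right _ _) (min_le_left _ _)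
  have hr_b : r ≤ 1/(8*(|b|+1)) :=
    le_trans (min_le_right _ _) (le_trans (min_le_right _ _) (min_le_left _ _))
  have hr_H : r ≤ 1/(‖H‖+1) :=
    le_trans (min_le_right _ _) (le_trans (min_le_right _ _) (min_le_right _ _))
  refine ⟨r, hrpos, s, ?_, hs0, ?_, ?_⟩
  · intro t ht
    exact hsana t (lt_of_lt_of_le (by simpa using ht) hr_r₀)
  · intro t ht
    exact hs_sq t (lt_of_lt_of_le (by simpa using ht) hr_r₀)
  intro t ht
  have htn : ‖t‖ < r := by simpa using ht
  rcases eq_or_ne t 0 with rfl | htne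
  · refine ⟨1, ?_, ?_⟩
    · have he : (fun n : ℕ => (inner ℂ ((H ^ n) deltaOne) deltaOne : ℂ) * (0:ℂ)^n)
          = fun n : ℕ => if n = 0 then 1 else 0 := by
        funext n
        cases n with
        | zero =>
          simp only [pow_zero, ContinuousLinearMap.one_apply, pow_zero, mul_one, if_pos]
          rw [inner_delta_left, delta_one_one]
        | succ m => simp
      rw [he]
      simpa using hasSum_ite_eq 0 (1:ℂ)
    · rw [hs0]; norm_num
  · set q : ℂ := 1 - 2*(b:ℂ)*t with hq_def
    set S : ℂ := s t with hS_def
    have hS2 : S^2 = q^2 - 4*(a:ℂ)^2*t^2 := by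
      rw [hS_def, hs_sq t (lt_of_lt_of_le htn hr_r₀), hg_def, hq_def]; ring
    have hS1 : ‖S - 1‖ < 1/4 := hr₁' t (lt_of_lt_of_le htn hr_r₁')
    have hna : ‖(a:ℂ)‖ = |a| := by rw [Complex.norm_real, Real.norm_eq_abs]
    have hnb : ‖(b:ℂ)‖ = |b| := by rw [Complex.norm_real, Real.norm_eq_abs]
    have hbt : ‖2*(b:ℂ)*t‖ ≤ 1/4 := by
      have he : ‖2*(b:ℂ)*t‖ = 2*|b| * ‖t‖ := by
        rw [norm_mul, norm_mul, hnb]; norm_num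
      rw [he]
      have hb1 : 2*|b| * ‖t‖ ≤ 2*|b| * (1/(8*(|b|+1))) :=
        mul_le_mul_of_nonneg_left (le_of_lt (lt_of_lt_of_le htn hr_b)) (by positivity)
      have hb2 : 2*|b| * (1/(8*(|b|+1))) ≤ 1/4 := by
        rw [mul_one_div, div_le_div_iff₀ (by positivity) (by norm_num)]
        nlinarith [abs_nonneg b]
      linarith
    have hqS_ge : 1 ≤ ‖q + S‖ := by
      have h2 : ‖q + S - 2‖ ≤ ‖S - 1‖ + ‖2*(b:ℂ)*t‖ := by
        have he : q + S - 2 = (S - 1) + (-(2*(b:ℂ)*t)) := by rw [hq_def]; ring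
        rw [he]
        exact le_trans (norm_add_le _ _) (by rw [norm_neg])
      have h4 : ‖(2:ℂ)‖ - ‖q+S‖ ≤ ‖q + S - 2‖ := by
        have h4' := norm_sub_norm_le (2:ℂ) (q + S)
        rw [← norm_neg (2 - (q+S))] at h4'
        simpa [neg_sub] using h4'
      have h5 : ‖(2:ℂ)‖ = 2 := by norm_num
      linarith
    have hqS : q + S ≠ 0 := by
      intro h; rw [h] at hqS_ge; simp at hqS_ge; linarith
    set w : ℂ := 2*(a:ℂ)*t/(q+S) with hw_def
    have hw_mul : w * (q+S) = 2*(a:ℂ)*t := div_mul_cancel₀ _ hqS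
    have hw_norm : ‖w‖ ≤ 2*|a| * ‖t‖ := by
      rw [hw_def, norm_div]
      have h6 : ‖2*(a:ℂ)*t‖ = 2*|a| * ‖t‖ := by
        rw [norm_mul, norm_mul, hna]; norm_num
      rw [h6]
      exact div_le_self (by positivity) hqS_ge
    have hta : 2*|a| * ‖t‖ ≤ 1/4 := by
      have ha1 : 2*|a| * ‖t‖ ≤ 2*|a| * (1/(8*(|a|+1))) :=
        mul_le_mul_of_nonneg_left (le_of_lt (lt_of_lt_of_le htn hr_a)) (by positivity)
      have ha2 : 2*|a| * (1/(8*(|a|+1))) ≤ 1/4 := by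
        rw [mul_one_div, div_le_div_iff₀ (by positivity) (by norm_num)]
        nlinarith [abs_nonneg a]
      linarith
    have hw1 : ‖w‖ < 1/2 := lt_of_le_of_lt hw_norm (lt_of_le_of_lt hta (by norm_num))
    have hquad' : (q+S)^2 * ((t*(a:ℂ))*w^2 - q*w + (t*(a:ℂ))) = 0 := by
      linear_combination ((t*(a:ℂ))*(w*(q+S)+2*(a:ℂ)*t) - q*(q+S)) * hw_mul
        + (t*(a:ℂ)) * hS2
    have hquad : (t*(a:ℂ))*w^2 - q*w + (t*(a:ℂ)) = 0 := by
      rcases mul_eq_zero.mp hquad' with h | h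
      · exact absurd (pow_eq_zero_iff two_ne_zero |>.mp h) hqS
      · exact h
    have hbw : 2*(b:ℂ)*w + (a:ℂ) ≠ 0 := by
      intro h
      have h9 : (2*(b:ℂ)*w) = -(a:ℂ) := by linear_combination h
      have h10 : ‖2*(b:ℂ)*w‖ = |a| := by rw [h9, norm_neg, hna]
      have h11 : ‖2*(b:ℂ)*w‖ ≤ 2*|b| * (2*|a| * ‖t‖) := by
        rw [norm_mul, norm_mul, hnb]
        have := mul_le_mul_of_nonneg_left hw_norm (by positivity : (0:ℝ) ≤ ‖(2:ℂ)‖*|b|)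
        calc ‖(2:ℂ)‖*|b| * ‖w‖ ≤ ‖(2:ℂ)‖*|b| * (2*|a| * ‖t‖) := by
              exact mul_le_mul_of_nonneg_left hw_norm (by positivity)
          _ = 2*|b| * (2*|a| * ‖t‖) := by norm_num
      have h12 : 2*|b| * ‖t‖ ≤ 1/4 := by
        have hb1 : 2*|b| * ‖t‖ ≤ 2*|b| * (1/(8*(|b|+1))) :=
          mul_le_mul_of_nonneg_left (le_of_lt (lt_of_lt_of_le htn hr_b)) (by positivity)
        have hb2 : 2*|b| * (1/(8*(|b|+1))) ≤ 1/4 := by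
          rw [mul_one_div, div_le_div_iff₀ (by positivity) (by norm_num)]
          nlinarith [abs_nonneg b]
        linarith
      have hapos : 0 < |a| := abs_pos.mpr ha
      have key : 2*|a| * (2*|b| * ‖t‖) ≤ 2*|a| * (1/4) :=
        mul_le_mul_of_nonneg_left h12 (by positivity)
      have h14 : 2*|b| * (2*|a| * ‖t‖) = 2*|a| * (2*|b| * ‖t‖) := by ring
      rw [h14] at h11
      linarith
    have hcne : (t*(2*(b:ℂ)*w + (a:ℂ))) ≠ 0 := mul_ne_zero htne hbw
    set c : ℂ := (t*(2*(b:ℂ)*w + (a:ℂ)))⁻¹ with hc_def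
    have hc_ne : c ≠ 0 := inv_ne_zero hcne
    have hw_ne : w ≠ 0 := by
      rw [hw_def]
      exact div_ne_zero (by
        apply mul_ne_zero (mul_ne_zero two_ne_zero ?_) htne
        exact_mod_cast Complex.ofReal_ne_zero.mpr ha) hqS
    set u : l2PNat := ⟨fun n : ℕ+ => c * w ^ (n:ℕ),
      memlp_geom c w (lt_trans hw1 (by norm_num))⟩ with hu_def
    have hu_coord : ∀ k : ℕ+, (u : ∀ _ : ℕ+, ℂ) k = c * w^(k:ℕ) := fun _ => rfl
    set T : l2PNat →L[ℂ] l2PNat := t • H with hT_def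
    have hT : ‖T‖ < 1 := by
      rw [hT_def]
      have : ‖t • H‖ ≤ ‖t‖ * ‖H‖ := le_of_eq (norm_smul t H)
      have h13 : ‖t‖ < 1/(‖H‖+1) := lt_of_lt_of_le htn hr_H
      have h14 : ‖t‖ * ‖H‖ < 1 := by
        have hH1 : (0:ℝ) < ‖H‖ + 1 := by positivity
        have h15 := mul_lt_mul_of_pos_right h13 hH1
        rw [div_mul_cancel₀ 1 (ne_of_gt hH1)] at h15
        nlinarith [norm_nonneg t, norm_nonneg H]
      linarith
    have hTu : (1 - T) u = deltaOne := by
      apply lp.ext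
      funext k
      have hcoord : ((1 - T) u : ∀ _ : ℕ+, ℂ) k = u k - t * ((H u : ∀ _ : ℕ+, ℂ) k) := by
        rw [ContinuousLinearMap.sub_apply, ContinuousLinearMap.one_apply, hT_def,
          ContinuousLinearMap.smul_apply, lp.coeFn_sub, Pi.sub_apply, lp.coeFn_smul,
          Pi.smul_apply, smul_eq_mul]
      rw [hcoord]
      rcases eq_or_ne k 1 with rfl | hk1
      · rw [h1 u, delta_one_one, hu_coord, hu_coord]
        rw [show ((1:ℕ+):ℕ) = 1 from rfl, show ((2:ℕ+):ℕ) = 2 from rfl]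
        rw [hc_def]
        field_simp
        linear_combination (-1 : ℂ) * hquad
      · obtain ⟨m, rfl⟩ := PNat.exists_eq_succ_of_ne_one hk1
        rw [hrec u m, delta_one_succ, hu_coord, hu_coord, hu_coord]
        rw [show ((m+1:ℕ+):ℕ) = (m:ℕ)+1 by simp [PNat.add_coe],
          show ((m+2:ℕ+):ℕ) = (m:ℕ)+2 by simp [PNat.add_coe]]
        linear_combination (-(c * w^((m:ℕ)))) * hquad
    -- geometric series
    have hGsum : Summable (fun n : ℕ => T^n) := summable_geometric_of_norm_lt_one hT
    set G : l2PNat →L[ℂ] l2PNat := ∑' n : ℕ, T^n with hG_def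
    have hmul1 : G * (1 - T) = 1 := geom_series_mul_neg T hT
    have hGu : G deltaOne = u := by
      calc G deltaOne = G ((1 - T) u) := by rw [hTu]
        _ = (G * (1 - T)) u := by rw [ContinuousLinearMap.mul_apply]
        _ = u := by rw [hmul1, ContinuousLinearMap.one_apply]
    have hsum_vec : HasSum (fun n : ℕ => (T^n) deltaOne) (G deltaOne) :=
      (ContinuousLinearMap.apply ℂ l2PNat deltaOne).hasSum hGsum.hasSum
    have hsum_c : HasSum (fun n : ℕ => (inner ℂ deltaOne ((T^n) deltaOne) : ℂ))
        (inner ℂ deltaOne (G deltaOne) : ℂ) :=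
      (innerSL ℂ deltaOne).hasSum hsum_vec
    have hterm : ∀ n : ℕ, (inner ℂ deltaOne ((T^n) deltaOne) : ℂ)
        = (inner ℂ ((H^n) deltaOne) deltaOne : ℂ) * t^n := by
      intro n
      rw [inner_delta_left, moment_eq H hsa n, hT_def, smul_pow,
        ContinuousLinearMap.smul_apply, lp.coeFn_smul, Pi.smul_apply, smul_eq_mul]
      ring
    have hP : HasSum (fun n : ℕ => (inner ℂ ((H^n) deltaOne) deltaOne : ℂ) * t^n)
        (inner ℂ deltaOne (G deltaOne) : ℂ) := by
      have hfun : (fun n : ℕ => (inner ℂ ((H^n) deltaOne) deltaOne : ℂ) * t^n)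
          = fun n : ℕ => (inner ℂ deltaOne ((T^n) deltaOne) : ℂ) := by
        funext n; rw [hterm n]
      rw [hfun]
      exact hsum_c
    have hPval : (inner ℂ deltaOne (G deltaOne) : ℂ) = c * w := by
      rw [hGu, inner_delta_left, hu_coord]
      norm_num
    refine ⟨c * w, hPval ▸ hP, ?_⟩
    have hkey : c * (t*(2*(b:ℂ)*w + (a:ℂ))) = 1 := inv_mul_cancel₀ hcne
    have hgoal : ∀ C W Q : ℂ, C ≠ 0 → W ≠ 0 →
        C * (t*(2*(b:ℂ)*W + (a:ℂ))) = 1 → W * (Q + S) = 2*(a:ℂ)*t →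
        Q = 1 - 2*(b:ℂ)*t → 1 - 1/(C*W) = 1/2 - (b:ℂ)*t - S/2 := by
      intro C W Q hC hW hk hm hQ
      subst hQ
      field_simp
      linear_combination C * hm + 2 * hk
    exact hgoal c w q hc_ne hw_ne hkey hw_mul hq_def
lemma pnat_cases (k : ℕ+) : k = 1 ∨ ∃ m : ℕ+, k = m + 1 := by
  rcases eq_or_ne k 1 with h | h
  · exact Or.inl h
  · exact Or.inr (PNat.exists_eq_succ_of_ne_one h)

lemma zero_case (H : l2PNat →L[ℂ] l2PNat) (hH : H = 0) (t : ℂ) :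
    HasSum (fun n : ℕ => (inner ℂ ((H ^ n) deltaOne) deltaOne : ℂ) * t^n) 1 := by
  have hterm : (fun n : ℕ => (inner ℂ ((H ^ n) deltaOne) deltaOne : ℂ) * t^n)
      = fun n : ℕ => if n = 0 then 1 else 0 := by
    funext n
    cases n with
    | zero =>
      simp only [pow_zero, ContinuousLinearMap.one_apply, mul_one, if_pos]
      rw [inner_delta_left, delta_one_one]
    | succ m =>
      rw [hH]
      simp
  rw [hterm]
  simpa using hasSum_ite_eq 0 (1:ℂ)

/-- The first-return generating functions of the weighted graphs `Φ` and
`Ψ` satisfy `1 − 1/P_Φ(t) = 1/2 − βt − (1/2)√((2βt−1)² − 4α²t²)` and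
`1 − 1/P_Ψ(t) = 1/2 − (1/2)√(1 − 4(α+β)²t²)` near `t = 0`. -/
theorem generating_functions_Phi_Psi
    (α β : ℝ) (hα : α ≠ 0) (hβ : β ≠ 0)
    (HΦ HΨ : l2PNat →L[ℂ] l2PNat)
    (hHΦsa : IsSelfAdjoint HΦ) (hHΨsa : IsSelfAdjoint HΨ)
    (hHΦ1 : ∀ f : l2PNat, HΦ f 1 = (α:ℂ) * f 2)
    (hHΦ : ∀ (f : l2PNat) (n : ℕ+),
      HΦ f (n + 1) = (α:ℂ) * f n + 2*(β:ℂ) * f (n+1) + (α:ℂ) * f (n+2))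
    (hHΨ1 : ∀ f : l2PNat, HΨ f 1 = ((α:ℂ)+(β:ℂ)) * f 2)
    (hHΨ : ∀ (f : l2PNat) (n : ℕ+),
      HΨ f (n + 1) = ((α:ℂ)+(β:ℂ)) * (f n + f (n+2))) :
    ∃ r : ℝ, 0 < r ∧
      -- analytic branches of the two square roots, equal to `1` at `t = 0`
      ∃ s₁ s₂ : ℂ → ℂ,
        AnalyticOnNhd ℂ s₁ (ball 0 r) ∧ AnalyticOnNhd ℂ s₂ (ball 0 r)
        ∧ s₁ 0 = 1 ∧ s₂ 0 = 1
        ∧ (∀ t ∈ ball (0:ℂ) r,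
            (s₁ t)^2 = (2*(β:ℂ)*t - 1)^2 - 4*(α:ℂ)^2 * t^2
            ∧ (s₂ t)^2 = 1 - 4*((α:ℂ)+(β:ℂ))^2 * t^2)
        ∧ ∀ t ∈ ball (0:ℂ) r,
          (∃ PΦ : ℂ, HasSum (fun n : ℕ => (inner ℂ ((HΦ ^ n) deltaOne) deltaOne : ℂ) * t^n) PΦ
            ∧ 1 - 1/PΦ = 1/2 - (β:ℂ)*t - s₁ t / 2)
          ∧ (∃ PΨ : ℂ, HasSum (fun n : ℕ => (inner ℂ ((HΨ ^ n) deltaOne) deltaOne : ℂ) * t^n) PΨ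
            ∧ 1 - 1/PΨ = 1/2 - s₂ t / 2) := by
  obtain ⟨r₁, hr₁pos, s₁, hs₁ana, hs₁0, hs₁sq, hs₁P⟩ :=
    main_lemma α β hα HΦ hHΦsa hHΦ1 hHΦ
  have hcast : (((α+β:ℝ)):ℂ) = (α:ℂ)+(β:ℂ) := by push_cast; ring
  obtain ⟨r₂, hr₂pos, s₂, hs₂ana, hs₂0, hs₂sq, hs₂P⟩ :
      ∃ r : ℝ, 0 < r ∧ ∃ s : ℂ → ℂ,
        AnalyticOnNhd ℂ s (ball 0 r) ∧ s 0 = 1 ∧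
        (∀ t ∈ ball (0:ℂ) r, (s t)^2 = 1 - 4*((α:ℂ)+(β:ℂ))^2 * t^2) ∧
        (∀ t ∈ ball (0:ℂ) r, ∃ P : ℂ,
          HasSum (fun n : ℕ => (inner ℂ ((HΨ ^ n) deltaOne) deltaOne : ℂ) * t^n) P ∧
          1 - 1/P = 1/2 - s t / 2) := by
    rcases eq_or_ne (α + β) 0 with hab | hab
    · -- HΨ = 0
      have hab' : (α:ℂ)+(β:ℂ) = 0 := by rw [← hcast, hab]; norm_num
      have hH0 : HΨ = 0 := by
        ext f k
        have hz : ((0 : l2PNat →L[ℂ] l2PNat) f : ∀ _ : ℕ+, ℂ) k = 0 := by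
          rw [ContinuousLinearMap.zero_apply]
          simp
        rw [hz]
        rcases pnat_cases k with rfl | ⟨m, rfl⟩
        · rw [hHΨ1 f, hab', zero_mul]
        · rw [hHΨ f m, hab', zero_mul]
      refine ⟨1, one_pos, fun _ => 1, ?_, rfl, ?_, ?_⟩
      · intro t _; exact analyticAt_const
      · intro t _
        rw [hab']
        ring
      · intro t _
        refine ⟨1, zero_case HΨ hH0 t, by norm_num⟩
    · obtain ⟨r₂, hr₂pos, s₂, h2ana, h20, h2sq, h2P⟩ :=
        main_lemma (α+β) 0 hab HΨ hHΨsa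
          (fun f => by rw [hHΨ1 f, hcast])
          (fun f n => by rw [hHΨ f n, hcast]; push_cast; ring)
      refine ⟨r₂, hr₂pos, s₂, h2ana, h20, ?_, ?_⟩
      · intro t ht
        rw [h2sq t ht, hcast]
        push_cast
        ring
      · intro t ht
        obtain ⟨P, hP1, hP2⟩ := h2P t ht
        refine ⟨P, hP1, ?_⟩
        rw [hP2]
        push_cast
        ring
  refine ⟨min r₁ r₂, lt_min hr₁pos hr₂pos, s₁, s₂, ?_, ?_, hs₁0, hs₂0, ?_, ?_⟩
  · exact hs₁ana.mono (ball_subset_ball (min_le_left _ _))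
  · exact hs₂ana.mono (ball_subset_ball (min_le_right _ _))
  · intro t ht
    exact ⟨hs₁sq t (ball_subset_ball (min_le_left _ _) ht),
      hs₂sq t (ball_subset_ball (min_le_right _ _) ht)⟩
  · intro t ht
    exact ⟨hs₁P t (ball_subset_ball (min_le_left _ _) ht),
      hs₂P t (ball_subset_ball (min_le_right _ _) ht)⟩


end
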